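/- arXiv:1506.05654 — 5 statements merged into one kernel-verified Lean document; each statement's English description precedes it below -/
import Mathlib

section
/- Let ℓ > 0, y > 0, x ∈ ℝ, and suppose A = 2·cosh(ℓ), B = 2y·cosh(x), C = 2y·cosh(ℓ − x) satisfy A² + B² + C² − A·B·C − 2 < 2. Then y > 1. -/
theorem y_gt_one_of_commutator_trace_lt_two
    (ℓ y x : ℝ) (hℓ : ℓ > 0) (hy : y > 0)
    (A B C : ℝ)
    (hA : A = 2 * Real.cosh ℓ)
    (hB : B = 2 * y * Real.cosh x)
    (hC : C = 2 * y * Real.cosh (ℓ - x))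
    (hK : A^2 + B^2 + C^2 - A * B * C - 2 < 2) :
    y > 1 := by
  have hpℓ : Real.exp ℓ > 0 := Real.exp_pos _
  have hpx : Real.exp x > 0 := Real.exp_pos _
  have key : A^2 + B^2 + C^2 - A * B * C - 4
      = (1 - y^2) * (Real.exp ℓ - Real.exp (-ℓ))^2 := by
    subst hA hB hC
    simp only [Real.cosh_eq, Real.exp_sub, Real.exp_neg]
    field_simp
    ring
  have hgt : Real.exp ℓ - Real.exp (-ℓ) > 0 := by
    have : Real.exp (-ℓ) < Real.exp ℓ := Real.exp_lt_exp.mpr (by linarith)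
    linarith
  have h1 : (1 - y^2) * (Real.exp ℓ - Real.exp (-ℓ))^2 < 0 := by linarith
  have h2 : 1 - y^2 < 0 := by nlinarith [mul_pos hgt hgt]
  nlinarith
end

section
/- Let ℓ > 0, y > 1, x ∈ ℝ, and for n ∈ ℤ set ξ = nℓ − x. Define, for real Y and X = Y/(y·tanh ξ) + n (assuming sinh ξ ≠ 0), the quantities F(m) = 2Y·cosh(mℓ − x) + 2y(m − X)·sinh(mℓ − x) for m ∈ ℤ. Then the equation F(n+1)·F(n−1) = 4·sinh²(ℓ) is equivalent to Z = Y/y being a root of the quadratic Z²·sinh²(ℓ)/sinh²(ξ) − 2Z·sinh(ℓ)·cosh(ℓ) + (sinh²(ξ) − (1 − y⁻²)·sinh²(ℓ)) = 0. -/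
/-!
Write `Z = Y / y`. Since `n - X = -Z cosh ξ / sinh ξ`, the subtraction formula
`sinh ξ cosh (ξ + t) - cosh ξ sinh (ξ + t) = -sinh t` collapses the entries to
`F (n + k) = 2y (k sinh (ξ + kℓ) - Z sinh (kℓ) / sinh ξ)`.
Multiplying the cases `k = ±1` and using `sinh (ξ + ℓ) sinh (ξ - ℓ) = sinh² ξ - sinh² ℓ`,
`sinh (ξ + ℓ) + sinh (ξ - ℓ) = 2 sinh ξ cosh ℓ` gives
`F (n + 1) F (n - 1) - 4 sinh² ℓ = -4y² · (the quadratic in Z)`.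
-/

open Real

lemma sinh_mul_cosh_add_sub_cosh_mul_sinh_add (ξ t : ℝ) :
    sinh ξ * cosh (ξ + t) - cosh ξ * sinh (ξ + t) = -sinh t := by
  rw [← sinh_sub, sub_add_cancel_left, sinh_neg]

lemma sinh_add_mul_sinh_sub (a b : ℝ) :
    sinh (a + b) * sinh (a - b) = sinh a ^ 2 - sinh b ^ 2 := by
  rw [sinh_add, sinh_sub]
  linear_combination sinh a ^ 2 * cosh_sq b - sinh b ^ 2 * cosh_sq a

lemma sinh_add_add_sinh_sub (a b : ℝ) :
    sinh (a + b) + sinh (a - b) = 2 * sinh a * cosh b := by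
  rw [sinh_add, sinh_sub]
  ring

lemma markoff_entry_add_eq {ℓ y x Y X ξ : ℝ} {n : ℤ} {F : ℤ → ℝ} (hy : y ≠ 0)
    (hξ : ξ = (n : ℝ) * ℓ - x) (hsξ : sinh ξ ≠ 0)
    (hX : X = Y / (y * tanh ξ) + (n : ℝ))
    (hF : ∀ m : ℤ, F m = 2 * Y * cosh ((m : ℝ) * ℓ - x)
        + 2 * y * ((m : ℝ) - X) * sinh ((m : ℝ) * ℓ - x)) (k : ℤ) :
    F (n + k) = 2 * y * (k * sinh (ξ + k * ℓ) - Y / y * sinh (k * ℓ) / sinh ξ) := by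
  have harg : ((n + k : ℤ) : ℝ) * ℓ - x = ξ + k * ℓ := by push_cast; rw [hξ]; ring
  have hsub := sinh_mul_cosh_add_sub_cosh_mul_sinh_add ξ (k * ℓ)
  rw [hF, harg, hX, tanh_eq_sinh_div_cosh]
  push_cast
  field_simp
  linear_combination Y * hsub

theorem quadratic_equivalence_general
    (ℓ y x : ℝ) (hy : y > 1) (n : ℤ)
    (ξ : ℝ) (hξ : ξ = (n : ℝ) * ℓ - x) (hsξ : Real.sinh ξ ≠ 0)
    (Y X : ℝ) (hX : X = Y / (y * Real.tanh ξ) + (n : ℝ))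
    (F : ℤ → ℝ)
    (hF : ∀ m : ℤ, F m = 2 * Y * Real.cosh ((m : ℝ) * ℓ - x)
        + 2 * y * ((m : ℝ) - X) * Real.sinh ((m : ℝ) * ℓ - x)) :
    F (n + 1) * F (n - 1) = 4 * (Real.sinh ℓ)^2 ↔
      (Y / y)^2 * (Real.sinh ℓ)^2 / (Real.sinh ξ)^2
        - 2 * (Y / y) * Real.sinh ℓ * Real.cosh ℓ
        + ((Real.sinh ξ)^2 - (1 - (y⁻¹)^2) * (Real.sinh ℓ)^2) = 0 := by
  have hy0 : y ≠ 0 := by positivity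
  have hplus := markoff_entry_add_eq hy0 hξ hsξ hX hF 1
  have hminus := markoff_entry_add_eq hy0 hξ hsξ hX hF (-1)
  simp only [Int.cast_one, one_mul] at hplus
  simp only [Int.cast_neg, Int.cast_one, neg_one_mul, sinh_neg, ← sub_eq_add_neg] at hminus
  have hdiff : F (n + 1) * F (n - 1) - 4 * sinh ℓ ^ 2
      = -(4 * y ^ 2) * ((Y / y) ^ 2 * sinh ℓ ^ 2 / sinh ξ ^ 2
        - 2 * (Y / y) * sinh ℓ * cosh ℓ
        + (sinh ξ ^ 2 - (1 - y⁻¹ ^ 2) * sinh ℓ ^ 2)) := by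
    rw [hplus, hminus]
    have hprod := sinh_add_mul_sinh_sub ξ ℓ
    have hsum := sinh_add_add_sinh_sub ξ ℓ
    field_simp
    linear_combination (-4 * y ^ 2 * sinh ξ ^ 2) * hprod + (4 * y * sinh ξ * Y * sinh ℓ) * hsum
  rw [← sub_eq_zero, hdiff, mul_eq_zero, neg_eq_zero]
  simp [hy0]

theorem quadratic_equivalence
    (ℓ y x : ℝ) (hℓ : ℓ > 0) (hy : y > 1) (n : ℤ)
    (ξ : ℝ) (hξ : ξ = (n : ℝ) * ℓ - x) (hsξ : Real.sinh ξ ≠ 0)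
    (Y X : ℝ) (hX : X = Y / (y * Real.tanh ξ) + (n : ℝ))
    (F : ℤ → ℝ)
    (hF : ∀ m : ℤ, F m = 2 * Y * Real.cosh ((m : ℝ) * ℓ - x)
        + 2 * y * ((m : ℝ) - X) * Real.sinh ((m : ℝ) * ℓ - x)) :
    F (n + 1) * F (n - 1) = 4 * (Real.sinh ℓ)^2 ↔
      (Y / y)^2 * (Real.sinh ℓ)^2 / (Real.sinh ξ)^2
        - 2 * (Y / y) * Real.sinh ℓ * Real.cosh ℓ
        + ((Real.sinh ξ)^2 - (1 - (y⁻¹)^2) * (Real.sinh ℓ)^2) = 0 :=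
  quadratic_equivalence_general ℓ y x hy n ξ hξ hsξ Y X hX F hF
end

section
/- Let ℓ > 0, y > 1, x ∈ ℝ, and for n ∈ ℤ set ξ_n = nℓ − x, and define Y_n^± = y·sinh²(ξ_n)/tanh(ℓ) ± y·sinh(ξ_n)·√(cosh²(ξ_n) − y⁻²) and X_n^± = sinh(ξ_n)·cosh(ξ_n)/tanh(ℓ) ± cosh(ξ_n)·√(cosh²(ξ_n) − y⁻²) + n. Then the projective point [1 : Y_n^± : X_n^±] converges as n → +∞ to [0 : y : 1] and as n → −∞ to [0 : y : −1]. -/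
/-!
With `c = (tanh ℓ)⁻¹ > 1` one has `Y n = y * tanh (ξ n) * (X n - n)` and, since the square
root is at most `cosh (ξ n)`, `|X n - n - c * sinh (ξ n) * cosh (ξ n)| ≤ cosh (ξ n) ^ 2`.
Hence for large `|n|`, `X n - n` has the sign of `n` and size at least
`(c - 1) * exp (2 * |ξ n|) / 4 - O(1)`, which outgrows `n`: so `(X n - n) / n → +∞`, giving
`X n → ±∞` and `n / X n → 0`, and `Y n / X n = y * tanh (ξ n) * (1 - n / X n) → ±y`.
-/

open Filter Real Topology

theorem Filter.Tendsto.atTop_and_div_of_sub_div {α : Type*} {l : Filter α} {f a : α → ℝ}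
    (ha : Tendsto a l atTop) (h : Tendsto (fun i => (f i - a i) / a i) l atTop) :
    Tendsto f l atTop ∧ Tendsto (fun i => a i / f i) l (𝓝 0) := by
  have hq : Tendsto (fun i => f i / a i) l atTop := by
    refine (tendsto_atTop_add_const_left _ 1 h).congr' ?_
    filter_upwards [ha.eventually_ne_atTop 0] with i hi
    field_simp
    ring
  refine ⟨(ha.atTop_mul_atTop₀ hq).congr' ?_, hq.inv_tendsto_atTop.congr fun i => inv_div _ _⟩
  filter_upwards [ha.eventually_ne_atTop 0] with i hi
  exact mul_div_cancel₀ _ hi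

theorem Filter.Tendsto.atBot_and_div_of_sub_div {α : Type*} {l : Filter α} {f a : α → ℝ}
    (ha : Tendsto a l atBot) (h : Tendsto (fun i => (f i - a i) / a i) l atTop) :
    Tendsto f l atBot ∧ Tendsto (fun i => a i / f i) l (𝓝 0) := by
  obtain ⟨hf, haf⟩ :=
    (tendsto_neg_atBot_atTop.comp ha).atTop_and_div_of_sub_div (f := fun i => -f i)
      (h.congr fun i => by simp only [Function.comp_apply]; ring)
  exact ⟨tendsto_neg_atTop_iff.1 hf, haf.congr fun i => neg_div_neg_eq _ _⟩

theorem Filter.Tendsto.div_of_eq_mul_sub {α : Type*} {l : Filter α} {Y X a t : α → ℝ}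
    {y τ : ℝ} (ht : Tendsto t l (𝓝 τ)) (hY : ∀ i, Y i = y * t i * (X i - a i))
    (hX : ∀ᶠ i in l, X i ≠ 0) (ha : Tendsto (fun i => a i / X i) l (𝓝 0)) :
    Tendsto (fun i => Y i / X i) l (𝓝 (y * τ)) := by
  have h := ((tendsto_const_nhds (x := y)).mul ht).mul
    ((tendsto_const_nhds (x := (1 : ℝ))).sub ha)
  rw [sub_zero, mul_one] at h
  refine h.congr' ?_
  filter_upwards [hX] with i hi
  rw [hY]
  field_simp

theorem tendsto_intCast_atBot_atBot : Tendsto ((↑) : ℤ → ℝ) atBot atBot :=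
  tendsto_intCast_atBot_iff.2 tendsto_id

namespace Real

theorem one_lt_inv_tanh {ℓ : ℝ} (hℓ : 0 < ℓ) : 1 < (tanh ℓ)⁻¹ := by
  refine one_lt_inv_iff₀.2 ⟨?_, tanh_lt_one ℓ⟩
  rw [tanh_eq_sinh_div_cosh]
  exact div_pos (sinh_pos_iff.2 hℓ) (cosh_pos ℓ)

theorem one_sub_tanh (t : ℝ) : 1 - tanh t = exp (-t) / cosh t := by
  rw [tanh_eq_sinh_div_cosh, ← cosh_sub_sinh, sub_div, div_self (cosh_pos t).ne']

theorem tendsto_tanh_atTop : Tendsto tanh atTop (𝓝 1) := by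
  have h : Tendsto (fun t => 1 - tanh t) atTop (𝓝 0) := by
    refine squeeze_zero (fun t => ?_) (fun t => ?_)
      (tendsto_exp_atBot.comp tendsto_neg_atTop_atBot)
    · rw [one_sub_tanh]; positivity
    · rw [one_sub_tanh]; exact div_le_self (exp_pos _).le (one_le_cosh t)
  simpa using (tendsto_const_nhds (x := (1 : ℝ))).sub h

theorem tendsto_tanh_atBot : Tendsto tanh atBot (𝓝 (-1)) := by
  simpa [Function.comp_def, tanh_neg] using (tendsto_tanh_atTop.comp tendsto_neg_atBot_atTop).neg

theorem sinh_mul_cosh_mul_sub_cosh_sq (c t : ℝ) :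
    sinh t * cosh t * c - cosh t ^ 2 =
      ((c - 1) * exp (2 * t) - (c + 1) * exp (-(2 * t)) - 2) / 4 := by
  have h : exp t * exp (-t) = 1 := by rw [← exp_add, add_neg_cancel, exp_zero]
  rw [sinh_eq, cosh_eq, show 2 * t = t + t by ring, neg_add, exp_add, exp_add]
  linear_combination (-1 / 2 : ℝ) * h

theorem tendsto_sinh_mul_cosh_mul_sub_cosh_sq_div {c ℓ : ℝ} (hc : 1 < c) (hℓ : 0 < ℓ)
    (b : ℝ) :
    Tendsto (fun t => (sinh (ℓ * t + b) * cosh (ℓ * t + b) * c - cosh (ℓ * t + b) ^ 2) / t)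
      atTop atTop := by
  have hexp : Tendsto (fun t => (c - 1) / 4 * exp (2 * b) * (exp (2 * ℓ * t) / t ^ (1 : ℝ)))
      atTop atTop :=
    (tendsto_exp_mul_div_rpow_atTop 1 (2 * ℓ) (by positivity)).const_mul_atTop
      (mul_pos (by linarith) (exp_pos _))
  have hdecay : Tendsto (fun t => exp (-(2 * (ℓ * t + b)))) atTop (𝓝 0) :=
    tendsto_exp_atBot.comp <| tendsto_neg_atTop_atBot.comp <|
      (tendsto_atTop_add_const_right _ b (tendsto_id.const_mul_atTop hℓ)).const_mul_atTop two_pos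
  have hrest : Tendsto (fun t => -(((c + 1) * exp (-(2 * (ℓ * t + b))) + 2) / 4) * t⁻¹)
      atTop (𝓝 (-(((c + 1) * 0 + 2) / 4) * 0)) :=
    (((hdecay.const_mul _).add_const _).div_const _).neg.mul tendsto_inv_atTop_zero
  refine (hexp.atTop_add hrest).congr' ?_
  filter_upwards [eventually_gt_atTop 0] with t ht
  rw [sinh_mul_cosh_mul_sub_cosh_sq, rpow_one, show 2 * (ℓ * t + b) = 2 * ℓ * t + 2 * b by ring,
    exp_add]
  field_simp
  ring

theorem abs_mul_cosh_mul_sqrt_le {s a : ℝ} (hs : |s| ≤ 1) (ha : 0 ≤ a) (t : ℝ) :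
    |s * (cosh t * √(cosh t ^ 2 - a))| ≤ cosh t ^ 2 := by
  have hr : √(cosh t ^ 2 - a) ≤ cosh t := sqrt_le_iff.2 ⟨(cosh_pos t).le, by linarith⟩
  rw [abs_mul, abs_of_nonneg (by positivity : 0 ≤ cosh t * √(cosh t ^ 2 - a))]
  calc |s| * (cosh t * √(cosh t ^ 2 - a)) ≤ 1 * (cosh t * cosh t) := by
        gcongr
    _ = cosh t ^ 2 := by ring

end Real

section

variable {c ℓ x : ℝ} {ξ D : ℤ → ℝ}

theorem tendsto_atTop_of_forall_eq_mul_sub (hℓ : 0 < ℓ)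
    (hξ : ∀ n : ℤ, ξ n = n * ℓ - x) :
    Tendsto ξ atTop atTop := by
  rw [funext hξ]
  simpa only [sub_eq_add_neg] using
    tendsto_atTop_add_const_right _ (-x) (tendsto_intCast_atTop_atTop.atTop_mul_const hℓ)

theorem tendsto_atBot_of_forall_eq_mul_sub (hℓ : 0 < ℓ)
    (hξ : ∀ n : ℤ, ξ n = n * ℓ - x) :
    Tendsto ξ atBot atBot := by
  rw [funext hξ]
  simpa only [sub_eq_add_neg] using
    tendsto_atBot_add_const_right _ (-x) (tendsto_intCast_atBot_atBot.atBot_mul_const hℓ)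

theorem tendsto_div_intCast_atTop_of_abs_sub_le (hc : 1 < c) (hℓ : 0 < ℓ)
    (hξ : ∀ n : ℤ, ξ n = n * ℓ - x)
    (hD : ∀ n, |D n - sinh (ξ n) * cosh (ξ n) * c| ≤ cosh (ξ n) ^ 2) :
    Tendsto (fun n => D n / n) atTop atTop := by
  refine tendsto_atTop_mono' _ ?_
    ((tendsto_sinh_mul_cosh_mul_sub_cosh_sq_div hc hℓ (-x)).comp tendsto_intCast_atTop_atTop)
  filter_upwards [eventually_gt_atTop 0] with n hn
  rw [Function.comp_apply, show ℓ * n + -x = ξ n by rw [hξ]; ring]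
  exact div_le_div_of_nonneg_right (by linarith [(abs_le.1 (hD n)).1]) (Int.cast_pos.2 hn).le

theorem tendsto_div_intCast_atBot_of_abs_sub_le (hc : 1 < c) (hℓ : 0 < ℓ)
    (hξ : ∀ n : ℤ, ξ n = n * ℓ - x)
    (hD : ∀ n, |D n - sinh (ξ n) * cosh (ξ n) * c| ≤ cosh (ξ n) ^ 2) :
    Tendsto (fun n => D n / n) atBot atTop := by
  refine tendsto_atTop_mono' _ ?_ ((tendsto_sinh_mul_cosh_mul_sub_cosh_sq_div hc hℓ x).comp
    (tendsto_neg_atBot_atTop.comp tendsto_intCast_atBot_atBot))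
  filter_upwards [eventually_lt_atBot 0] with n hn
  simp only [Function.comp_apply]
  rw [show ℓ * -n + x = -ξ n by rw [hξ]; ring, sinh_neg, cosh_neg, div_neg, ← neg_div]
  exact div_le_div_of_nonpos_of_le (Int.cast_nonpos.2 hn.le)
    (by linarith [(abs_le.1 (hD n)).2])

end

theorem endpoints_limit_general
    (ℓ y x : ℝ) (hℓ : ℓ > 0)
    (s : ℝ) (hs : s = 1 ∨ s = -1)
    (ξ : ℤ → ℝ) (hξ : ∀ n : ℤ, ξ n = (n : ℝ) * ℓ - x)
    (Y X : ℤ → ℝ)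
    (hY : ∀ n : ℤ, Y n = y * (Real.sinh (ξ n))^2 / Real.tanh ℓ
        + s * (y * Real.sinh (ξ n) * Real.sqrt ((Real.cosh (ξ n))^2 - (y⁻¹)^2)))
    (hX : ∀ n : ℤ, X n = Real.sinh (ξ n) * Real.cosh (ξ n) / Real.tanh ℓ
        + s * (Real.cosh (ξ n) * Real.sqrt ((Real.cosh (ξ n))^2 - (y⁻¹)^2)) + (n : ℝ)) :
    (Filter.Tendsto X Filter.atTop Filter.atTop
      ∧ Filter.Tendsto (fun n => Y n / X n) Filter.atTop (nhds y))
    ∧ (Filter.Tendsto X Filter.atBot Filter.atBot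
      ∧ Filter.Tendsto (fun n => Y n / X n) Filter.atBot (nhds (-y))) := by
  have hc : 1 < (tanh ℓ)⁻¹ := one_lt_inv_tanh hℓ
  have hs₁ : |s| ≤ 1 := by rcases hs with rfl | rfl <;> simp
  have hYX : ∀ n, Y n = y * tanh (ξ n) * (X n - n) := fun n => by
    rw [hY, hX, add_sub_cancel_right, tanh_eq_sinh_div_cosh (ξ n)]
    field_simp [(cosh_pos (ξ n)).ne']
  have hXn : ∀ n, |X n - n - sinh (ξ n) * cosh (ξ n) * (tanh ℓ)⁻¹| ≤ cosh (ξ n) ^ 2 :=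
    fun n => by
    rw [hX, add_sub_cancel_right, div_eq_mul_inv, add_sub_cancel_left]
    exact abs_mul_cosh_mul_sqrt_le hs₁ (sq_nonneg _) _
  obtain ⟨hXtop, hnXtop⟩ := tendsto_intCast_atTop_atTop.atTop_and_div_of_sub_div
    (tendsto_div_intCast_atTop_of_abs_sub_le hc hℓ hξ hXn)
  obtain ⟨hXbot, hnXbot⟩ := tendsto_intCast_atBot_atBot.atBot_and_div_of_sub_div
    (tendsto_div_intCast_atBot_of_abs_sub_le hc hℓ hξ hXn)
  have htanh_top := tendsto_tanh_atTop.comp (tendsto_atTop_of_forall_eq_mul_sub hℓ hξ)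
  have htanh_bot := tendsto_tanh_atBot.comp (tendsto_atBot_of_forall_eq_mul_sub hℓ hξ)
  refine ⟨⟨hXtop, ?_⟩, hXbot, ?_⟩
  · simpa using htanh_top.div_of_eq_mul_sub hYX (hXtop.eventually_ne_atTop 0) hnXtop
  · simpa using htanh_bot.div_of_eq_mul_sub hYX (hXbot.eventually_ne_atBot 0) hnXbot

theorem endpoints_limit
    (ℓ y x : ℝ) (hℓ : ℓ > 0) (hy : y > 1)
    (s : ℝ) (hs : s = 1 ∨ s = -1)
    (ξ : ℤ → ℝ) (hξ : ∀ n : ℤ, ξ n = (n : ℝ) * ℓ - x)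
    (Y X : ℤ → ℝ)
    (hY : ∀ n : ℤ, Y n = y * (Real.sinh (ξ n))^2 / Real.tanh ℓ
        + s * (y * Real.sinh (ξ n) * Real.sqrt ((Real.cosh (ξ n))^2 - (y⁻¹)^2)))
    (hX : ∀ n : ℤ, X n = Real.sinh (ξ n) * Real.cosh (ξ n) / Real.tanh ℓ
        + s * (Real.cosh (ξ n) * Real.sqrt ((Real.cosh (ξ n))^2 - (y⁻¹)^2)) + (n : ℝ)) :
    (Filter.Tendsto X Filter.atTop Filter.atTop
      ∧ Filter.Tendsto (fun n => Y n / X n) Filter.atTop (nhds y))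
    ∧ (Filter.Tendsto X Filter.atBot Filter.atBot
      ∧ Filter.Tendsto (fun n => Y n / X n) Filter.atBot (nhds (-y))) :=
  endpoints_limit_general ℓ y x hℓ s hs ξ hξ Y X hY hX
end

section
/- Let A, B ∈ SL₂(ℝ) with tr(A) ≥ 2, tr(B) ≥ 2, and tr([A,B]) < 2. If Φ is the function on slopes defined by traces of the corresponding words (Φ(∞) = tr A, Φ(0) = tr B, Φ(1) = tr(AB), extended by the Markoff relation Φ(R) + Φ(R''') = Φ(R')Φ(R'') over the Farey triangulation), then for the basic quadruple: tr(AB) + tr(AB⁻¹) = tr(A)·tr(B), and if tr A > 2, tr B > 2 and tr[A,B] < 2 then also tr(AB) > 2 and tr(AB⁻¹) > 2. -/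
open Matrix

private lemma markoff_rel (M N : Matrix (Fin 2) (Fin 2) ℝ) :
    (M * N).trace + (M * N.adjugate).trace = M.trace * N.trace := by
  simp only [Matrix.trace_fin_two, Matrix.mul_apply, Fin.sum_univ_two,
    Matrix.adjugate_fin_two, Matrix.of_apply, Matrix.cons_val', Matrix.cons_val_zero, Matrix.cons_val_one,
    Matrix.head_cons, Matrix.empty_val', Matrix.cons_val_fin_one, Matrix.head_fin_const]
  ring

private lemma fricke_rel (M N : Matrix (Fin 2) (Fin 2) ℝ) (hM : M.det = 1) (hN : N.det = 1) :
    (M * N * M.adjugate * N.adjugate).trace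
      = M.trace ^ 2 + N.trace ^ 2 + (M * N).trace ^ 2
        - M.trace * N.trace * (M * N).trace - 2 := by
  rw [Matrix.det_fin_two] at hM hN
  simp only [Matrix.trace_fin_two, Matrix.mul_apply, Fin.sum_univ_two,
    Matrix.adjugate_fin_two, Matrix.of_apply, Matrix.cons_val', Matrix.cons_val_zero, Matrix.cons_val_one,
    Matrix.head_cons, Matrix.empty_val', Matrix.cons_val_fin_one, Matrix.head_fin_const]
  linear_combination ((N 0 0 + N 1 1) ^ 2 - 2) * hM
    + ((M 0 0) ^ 2 + 2 * (M 0 1) * (M 1 0) + (M 1 1) ^ 2) * hN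

private lemma key_ineq (x y z : ℝ) (hx : x > 2) (hy : y > 2)
    (h : x ^ 2 + y ^ 2 + z ^ 2 - x * y * z - 2 < 2) : z > 2 := by
  by_contra hz
  push_neg at hz
  nlinarith [sq_nonneg (x - y), mul_pos (sub_pos.2 hx) (sub_pos.2 hy),
    mul_nonneg (by linarith : (0:ℝ) ≤ 2 - z)
      (by nlinarith [mul_pos (sub_pos.2 hx) (sub_pos.2 hy)] : (0:ℝ) ≤ x * y - z - 2)]

theorem markoff_basic_quadruple
    (A B : Matrix.SpecialLinearGroup (Fin 2) ℝ)
    (hA : Matrix.trace (A : Matrix (Fin 2) (Fin 2) ℝ) ≥ 2)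
    (hB : Matrix.trace (B : Matrix (Fin 2) (Fin 2) ℝ) ≥ 2)
    (hK : Matrix.trace ((A * B * A⁻¹ * B⁻¹ : Matrix.SpecialLinearGroup (Fin 2) ℝ)
        : Matrix (Fin 2) (Fin 2) ℝ) < 2) :
    Matrix.trace ((A * B : Matrix.SpecialLinearGroup (Fin 2) ℝ) : Matrix (Fin 2) (Fin 2) ℝ)
        + Matrix.trace ((A * B⁻¹ : Matrix.SpecialLinearGroup (Fin 2) ℝ) : Matrix (Fin 2) (Fin 2) ℝ)
      = Matrix.trace (A : Matrix (Fin 2) (Fin 2) ℝ) * Matrix.trace (B : Matrix (Fin 2) (Fin 2) ℝ)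
    ∧ (Matrix.trace (A : Matrix (Fin 2) (Fin 2) ℝ) > 2 →
        Matrix.trace (B : Matrix (Fin 2) (Fin 2) ℝ) > 2 →
        Matrix.trace ((A * B : Matrix.SpecialLinearGroup (Fin 2) ℝ) : Matrix (Fin 2) (Fin 2) ℝ) > 2
        ∧ Matrix.trace ((A * B⁻¹ : Matrix.SpecialLinearGroup (Fin 2) ℝ)
            : Matrix (Fin 2) (Fin 2) ℝ) > 2) := by
  have hdA : Matrix.det (A : Matrix (Fin 2) (Fin 2) ℝ) = 1 := A.2
  have hdB : Matrix.det (B : Matrix (Fin 2) (Fin 2) ℝ) = 1 := B.2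
  simp only [Matrix.SpecialLinearGroup.coe_mul, Matrix.SpecialLinearGroup.coe_inv] at hK ⊢
  have hmk := markoff_rel (A : Matrix (Fin 2) (Fin 2) ℝ) (B : Matrix (Fin 2) (Fin 2) ℝ)
  have hfr := fricke_rel (A : Matrix (Fin 2) (Fin 2) ℝ) (B : Matrix (Fin 2) (Fin 2) ℝ) hdA hdB
  refine ⟨hmk, fun hx hy => ?_⟩
  rw [hfr] at hK
  have hz := key_ineq _ _ _ hx hy hK
  refine ⟨hz, ?_⟩
  have hw : Matrix.trace ((A : Matrix (Fin 2) (Fin 2) ℝ) * (B : Matrix (Fin 2) (Fin 2) ℝ).adjugate)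
      = Matrix.trace (A : Matrix (Fin 2) (Fin 2) ℝ) * Matrix.trace (B : Matrix (Fin 2) (Fin 2) ℝ)
        - Matrix.trace ((A : Matrix (Fin 2) (Fin 2) ℝ) * (B : Matrix (Fin 2) (Fin 2) ℝ)) := by
    linarith [hmk]
  refine key_ineq _ _ _ hx hy ?_
  rw [hw]
  nlinarith [hK]
end

section
/- Let A > 2 and let (u_n)_{n∈ℤ} satisfy u_{n+1} = A·u_n − u_{n−1}. Write A = 2·cosh(ℓ) with ℓ > 0. If additionally u_n > 2 for all n ∈ ℤ, then there exist y > 0 and x ∈ ℝ with u_n = 2y·cosh(nℓ − x) for all n ∈ ℤ. -/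
/-! Every solution of the recurrence is `L e^{nℓ} + M e^{-nℓ}`. If `L ≤ 0`, the terms tend to at
most `0` as `n → ∞`, and if `M ≤ 0` they do so as `n → -∞`; so a positive lower bound forces
`L, M > 0`, and a positive combination of `e^t` and `e^{-t}` is a rescaled, shifted `2 cosh`. -/

open Real Filter

theorem Int.eq_of_recurrence_of_eq_zero_one {R : Type*} [Ring R] {a : R} {u v : ℤ → R}
    (hu : ∀ n : ℤ, u (n + 1) = a * u n - u (n - 1))
    (hv : ∀ n : ℤ, v (n + 1) = a * v n - v (n - 1))
    (h0 : u 0 = v 0) (h1 : u 1 = v 1) : u = v := by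
  suffices h : ∀ n : ℤ, u n = v n ∧ u (n + 1) = v (n + 1) from funext fun n => (h n).1
  intro n
  induction n using Int.induction_on with
  | zero => exact ⟨h0, h1⟩
  | succ k ih =>
    refine ⟨ih.2, ?_⟩
    rw [hu, hv, add_sub_cancel_right, ih.1, ih.2]
  | pred k ih =>
    have hu' := hu (-k)
    have hv' := hv (-k)
    rw [sub_add_cancel]
    refine ⟨?_, ih.1⟩
    rw [eq_sub_iff_add_eq, ← eq_sub_iff_add_eq'] at hu' hv'
    rw [hu', hv', ih.1, ih.2]

theorem exp_form_recurrence (L M ℓ : ℝ) (n : ℤ) :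
    L * exp ((n + 1 : ℤ) * ℓ) + M * exp (-((n + 1 : ℤ) * ℓ)) =
      2 * cosh ℓ * (L * exp (n * ℓ) + M * exp (-(n * ℓ))) -
        (L * exp ((n - 1 : ℤ) * ℓ) + M * exp (-((n - 1 : ℤ) * ℓ))) := by
  push_cast
  simp only [add_mul, sub_mul, one_mul, neg_add, neg_sub, exp_add, exp_sub, cosh_eq, exp_neg]
  field_simp
  ring

theorem exists_exp_form_of_recurrence {ℓ : ℝ} (hℓ : ℓ ≠ 0) {u : ℤ → ℝ}
    (hrec : ∀ n : ℤ, u (n + 1) = 2 * cosh ℓ * u n - u (n - 1)) :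
    ∃ L M : ℝ, ∀ n : ℤ, u n = L * exp (n * ℓ) + M * exp (-(n * ℓ)) := by
  have hne : exp ℓ - exp (-ℓ) ≠ 0 := by
    rw [sub_ne_zero, Ne, exp_eq_exp]
    intro h
    exact hℓ (by linarith)
  refine ⟨(u 1 - u 0 * exp (-ℓ)) / (exp ℓ - exp (-ℓ)),
    (u 0 * exp ℓ - u 1) / (exp ℓ - exp (-ℓ)), congrFun ?_⟩
  refine Int.eq_of_recurrence_of_eq_zero_one hrec (fun n => exp_form_recurrence _ _ ℓ n) ?_ ?_
  · simp only [Int.cast_zero, zero_mul, neg_zero, exp_zero, mul_one]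
    field_simp
    ring
  · simp only [Int.cast_one, one_mul]
    field_simp
    rw [exp_neg]
    field_simp
    ring

theorem pos_of_forall_lt_exp_form {L M ℓ c : ℝ} (hℓ : 0 < ℓ) (hc : 0 < c)
    (h : ∀ n : ℕ, c < L * exp (n * ℓ) + M * exp (-(n * ℓ))) : 0 < L := by
  by_contra! hL
  have hdecay : Tendsto (fun n : ℕ => M * exp (-(n * ℓ))) atTop (nhds 0) := by
    simpa using (tendsto_exp_neg_atTop_nhds_zero.comp
      (tendsto_natCast_atTop_atTop.atTop_mul_const hℓ)).const_mul M
  obtain ⟨n, hn⟩ := (hdecay.eventually (gt_mem_nhds hc)).exists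
  have := h n
  nlinarith [exp_pos (n * ℓ)]

theorem exists_cosh_form_of_pos {L M : ℝ} (hL : 0 < L) (hM : 0 < M) :
    ∃ y > (0 : ℝ), ∃ x : ℝ, ∀ t : ℝ, L * exp t + M * exp (-t) = 2 * y * cosh (t - x) := by
  set y := exp ((log L + log M) / 2)
  refine ⟨y, exp_pos _, (log M - log L) / 2, fun t => ?_⟩
  -- with `L = exp a`, `M = exp b`, the exponents of the two terms are `a + t` and `b - t`
  have two_mul_cosh (z : ℝ) : 2 * y * cosh z = y * (exp z + exp (-z)) := by
    rw [cosh_eq]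
    ring
  rw [two_mul_cosh, mul_add, ← exp_add, ← exp_add]
  conv_lhs => rw [← exp_log hL, ← exp_log hM, ← exp_add, ← exp_add]
  congr 2 <;> ring

theorem cosh_form_of_positive_solution_general
    (A ℓ : ℝ) (hℓ : ℓ > 0) (hAℓ : A = 2 * Real.cosh ℓ)
    (u : ℤ → ℝ) (hrec : ∀ n : ℤ, u (n + 1) = A * u n - u (n - 1))
    (hpos : ∀ n : ℤ, u n > 2) :
    ∃ y > (0 : ℝ), ∃ x : ℝ, ∀ n : ℤ, u n = 2 * y * Real.cosh ((n : ℝ) * ℓ - x) := by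
  subst hAℓ
  obtain ⟨L, M, hLM⟩ := exists_exp_form_of_recurrence hℓ.ne' hrec
  have hL : 0 < L := pos_of_forall_lt_exp_form hℓ two_pos fun n => by
    simpa [hLM] using hpos n
  have hM : 0 < M := pos_of_forall_lt_exp_form hℓ two_pos fun n => by
    simpa [hLM, add_comm] using hpos (-n)
  obtain ⟨y, hy, x, hx⟩ := exists_cosh_form_of_pos hL hM
  exact ⟨y, hy, x, fun n => by rw [hLM, hx]⟩

theorem cosh_form_of_positive_solution
    (A ℓ : ℝ) (hA : A > 2) (hℓ : ℓ > 0) (hAℓ : A = 2 * Real.cosh ℓ)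
    (u : ℤ → ℝ) (hrec : ∀ n : ℤ, u (n + 1) = A * u n - u (n - 1))
    (hpos : ∀ n : ℤ, u n > 2) :
    ∃ y > (0 : ℝ), ∃ x : ℝ, ∀ n : ℤ, u n = 2 * y * Real.cosh ((n : ℝ) * ℓ - x) :=
  cosh_form_of_positive_solution_general A ℓ hℓ hAℓ u hrec hpos
end
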